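/- arXiv:2006.04452 — 12 statements merged into one kernel-verified Lean document; each statement's English description precedes it below -/
import Mathlib

section
/- The family (e_A), indexed by A : Finset (Fin n), of classes of the square-free monomials ∏_{i ∈ A} X i is a K-module basis of the n-th order tangent algebra K^n_{(t,s)}; in particular K^n_{(t,s)} is a free K-module of rank 2^n. -/
open MvPolynomial

/-- The defining ideal of the `n`-th order tangent algebra `K^n_{(t,s)}`:
generated by the elements `(X i - C (t i)) * (X i - C (s i))` for `i : Fin n`. -/
noncomputable abbrev tangentIdeal (K : Type*) [CommRing K] {n : ℕ} (t s : Fin n → K) :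
    Ideal (MvPolynomial (Fin n) K) :=
  Ideal.span (Set.range fun i : Fin n => (X i - C (t i)) * (X i - C (s i)))

/-- The `n`-th order tangent algebra `K^n_{(t,s)}`. -/
abbrev TangentAlgebra (K : Type*) [CommRing K] {n : ℕ} (t s : Fin n → K) :=
  MvPolynomial (Fin n) K ⧸ tangentIdeal K t s

/-!
The span of the classes `e_A` contains `1` and is stable under multiplication by the class `x_i`
of each `X i`, because `x_i ^ 2 = (t_i + s_i) x_i - t_i s_i`; so it is everything.

For independence, write `X ^ k ≡ a_k X + b_k` modulo `(X - u)(X - v)`. Both `a` and `b` satisfy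
the recurrence `f (k + 2) = (u + v) f (k + 1) - u v f k`, and a functional sending `X ^ d` to a
product `∏ j, f_j (d j)` of such sequences vanishes on `p * (X_j - t_j)(X_j - s_j)`.
Choosing `f_j = a` for `j ∈ A` and `f_j = b` otherwise gives a functional on the quotient
sending `e_B` to `1` if `B = A` and to `0` otherwise.
-/

namespace TangentAlgebra

open Finset

variable {K : Type*} [CommRing K]

/-- `X ^ k ≡ (powRem u v k).1 * X + (powRem u v k).2` modulo `(X - u) * (X - v)`. -/
def powRem (u v : K) : ℕ → K × K
  | 0 => (0, 1)
  | k + 1 => ((powRem u v k).1 * (u + v) + (powRem u v k).2, -((powRem u v k).1 * (u * v)))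

lemma powRem_fst_add_two (u v : K) (k : ℕ) :
    (powRem u v (k + 2)).1 = (u + v) * (powRem u v (k + 1)).1 - u * v * (powRem u v k).1 := by
  simp only [powRem]; ring

lemma powRem_snd_add_two (u v : K) (k : ℕ) :
    (powRem u v (k + 2)).2 = (u + v) * (powRem u v (k + 1)).2 - u * v * (powRem u v k).2 := by
  simp only [powRem]; ring

section Functional

variable {σ : Type*} [Fintype σ]

noncomputable def prodFunctional (f : σ → ℕ → K) : MvPolynomial σ K →ₗ[K] K :=
  (basisMonomials σ K).constr K fun d => ∏ i, f i (d i)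

lemma prodFunctional_monomial (f : σ → ℕ → K) (d : σ →₀ ℕ) (c : K) :
    prodFunctional f (monomial d c) = c * ∏ i, f i (d i) := by
  have h := (basisMonomials σ K).constr_basis K (fun d => ∏ i, f i (d i)) d
  rw [coe_basisMonomials] at h
  have hc : monomial d c = c • monomial d (1 : K) := by
    rw [smul_monomial, smul_eq_mul, mul_one]
  rw [hc, map_smul, prodFunctional, h, smul_eq_mul]

lemma prod_add_single_eq_mul_prod_erase [DecidableEq σ] (f : σ → ℕ → K) (d : σ →₀ ℕ) (i : σ)
    (k : ℕ) :
    ∏ j, f j ((d + Finsupp.single i k) j) = f i (d i + k) * ∏ j ∈ univ.erase i, f j (d j) := by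
  rw [← mul_prod_erase _ _ (mem_univ i)]
  congr 1
  · simp
  · refine prod_congr rfl fun j hj => ?_
    simp [(ne_of_mem_erase hj).symm]

lemma prodFunctional_mul_eq_zero [DecidableEq σ] (f : σ → ℕ → K) {i : σ} {u v : K}
    (hf : ∀ k, f i (k + 2) = (u + v) * f i (k + 1) - u * v * f i k)
    (p : MvPolynomial σ K) : prodFunctional f (p * ((X i - C u) * (X i - C v))) = 0 := by
  induction p using MvPolynomial.induction_on' with
  | monomial d c =>
    have hmon : ∀ k w,
        monomial (d + Finsupp.single i k) (c * w) = monomial d c * (C w * X i ^ k) := by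
      intro k w
      rw [X_pow_eq_monomial, C_mul_monomial, monomial_mul, mul_one]
    have hexp : monomial d c * ((X i - C u) * (X i - C v))
        = monomial (d + Finsupp.single i 2) (c * 1)
          - monomial (d + Finsupp.single i 1) (c * (u + v))
          + monomial (d + Finsupp.single i 0) (c * (u * v)) := by
      rw [hmon, hmon, hmon, C_1, C_add, C_mul]
      ring
    rw [hexp, map_add, map_sub, prodFunctional_monomial, prodFunctional_monomial,
      prodFunctional_monomial, prod_add_single_eq_mul_prod_erase,
      prod_add_single_eq_mul_prod_erase, prod_add_single_eq_mul_prod_erase, hf, add_zero]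
    ring
  | add p q hp hq => rw [add_mul, map_add, hp, hq, add_zero]

/-- Reads off the coefficient of `∏ i ∈ A, X i` once every `X j ^ k` has been reduced to
`(powRem (t j) (s j) k).1 * X j + (powRem (t j) (s j) k).2`. -/
noncomputable def coordFunctional [DecidableEq σ] (t s : σ → K) (A : Finset σ) :
    MvPolynomial σ K →ₗ[K] K :=
  prodFunctional fun j k => if j ∈ A then (powRem (t j) (s j) k).1 else (powRem (t j) (s j) k).2

lemma coordFunctional_prod_X [DecidableEq σ] (t s : σ → K) (A B : Finset σ) :
    coordFunctional t s A (∏ i ∈ B, X i) = if B = A then 1 else 0 := by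
  have hB : (∏ i ∈ B, X i : MvPolynomial σ K) = monomial (∑ i ∈ B, Finsupp.single i 1) 1 := by
    rw [monomial_sum_one]; rfl
  have hdeg : ∀ j, (∑ i ∈ B, Finsupp.single i 1 : σ →₀ ℕ) j = if j ∈ B then 1 else 0 := by
    intro j
    simp [Finsupp.finsetSum_apply, Finsupp.single_apply]
  rw [hB, coordFunctional, prodFunctional_monomial, one_mul]
  simp_rw [hdeg]
  split_ifs with h
  · subst h
    refine prod_eq_one fun j _ => ?_
    by_cases hj : j ∈ B <;> simp [hj, powRem]
  · obtain ⟨j, hj⟩ : ∃ j, ¬(j ∈ B ↔ j ∈ A) := by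
      by_contra! hc
      exact h (Finset.ext hc)
    refine prod_eq_zero (mem_univ j) ?_
    by_cases hjB : j ∈ B <;> simp_all [powRem]

end Functional

variable {n : ℕ} (t s : Fin n → K)

lemma coordFunctional_eq_zero_of_mem (A : Finset (Fin n)) {p : MvPolynomial (Fin n) K}
    (hp : p ∈ tangentIdeal K t s) : coordFunctional t s A p = 0 := by
  obtain ⟨c, rfl⟩ := Ideal.mem_span_range_iff_exists_fun.mp hp
  rw [map_sum]
  refine sum_eq_zero fun i _ => prodFunctional_mul_eq_zero _ (fun k => ?_) (c i)
  split_ifs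
  · exact powRem_fst_add_two (t i) (s i) k
  · exact powRem_snd_add_two (t i) (s i) k

noncomputable abbrev e (A : Finset (Fin n)) : TangentAlgebra K t s :=
  Ideal.Quotient.mk _ (∏ i ∈ A, X i)

lemma linearIndependent_e : LinearIndependent K (e t s) := by
  rw [Fintype.linearIndependent_iff]
  intro g hg B
  have hmem : ∑ A, g A • ∏ i ∈ A, X i ∈ tangentIdeal K t s := by
    rw [← Ideal.Quotient.eq_zero_iff_mem, ← Ideal.Quotient.mkₐ_eq_mk K, map_sum]
    simpa only [map_smul, Ideal.Quotient.mkₐ_eq_mk] using hg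
  have := coordFunctional_eq_zero_of_mem t s B hmem
  simpa [coordFunctional_prod_X] using this

lemma mk_X_sq (i : Fin n) :
    Ideal.Quotient.mk (tangentIdeal K t s) (X i) ^ 2
      = (t i + s i) • Ideal.Quotient.mk (tangentIdeal K t s) (X i) - (t i * s i) • 1 := by
  have h : X i ^ 2 - ((t i + s i) • X i - (t i * s i) • 1) ∈ tangentIdeal K t s := by
    have hgen : (X i - C (t i)) * (X i - C (s i)) ∈ tangentIdeal K t s :=
      Ideal.subset_span ⟨i, rfl⟩
    convert hgen using 1
    simp only [smul_eq_C_mul, C_add, C_mul]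
    ring
  simpa only [← Ideal.Quotient.mkₐ_eq_mk K, map_pow, map_sub, map_smul, map_one]
    using Ideal.Quotient.eq.mpr h

lemma mul_mk_X_mem_span_e {y : TangentAlgebra K t s}
    (hy : y ∈ Submodule.span K (Set.range (e t s))) (i : Fin n) :
    y * Ideal.Quotient.mk _ (X i) ∈ Submodule.span K (Set.range (e t s)) := by
  set x : TangentAlgebra K t s := Ideal.Quotient.mk _ (X i)
  have he : ∀ B, e t s B ∈ Submodule.span K (Set.range (e t s)) :=
    fun B => Submodule.subset_span ⟨B, rfl⟩
  induction hy using Submodule.span_induction with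
  | mem y hy =>
    obtain ⟨A, rfl⟩ := hy
    by_cases hi : i ∈ A
    · have hA : e t s A = x * e t s (A.erase i) := by
        rw [e, ← mul_prod_erase A _ hi, map_mul]
      have : e t s A * x = (t i + s i) • e t s A - (t i * s i) • e t s (A.erase i) := by
        rw [hA, mul_comm, ← mul_assoc, ← sq, mk_X_sq, sub_mul, smul_mul_assoc,
          smul_mul_assoc, one_mul]
      rw [this]
      exact sub_mem (Submodule.smul_mem _ _ (he A)) (Submodule.smul_mem _ _ (he _))
    · have : e t s A * x = e t s (insert i A) := by
        rw [e, e, prod_insert hi, map_mul, mul_comm]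
      rw [this]
      exact he _
  | zero => rw [zero_mul]; exact zero_mem _
  | add y z _ _ hy hz => rw [add_mul]; exact add_mem hy hz
  | smul c y _ hy => rw [smul_mul_assoc]; exact Submodule.smul_mem _ c hy

lemma span_e : Submodule.span K (Set.range (e t s)) = ⊤ := by
  rw [eq_top_iff]
  rintro y -
  obtain ⟨p, rfl⟩ := Ideal.Quotient.mk_surjective y
  induction p using MvPolynomial.induction_on with
  | C a =>
    have h1 : e t s ∅ = 1 := by rw [e, prod_empty, map_one]
    change algebraMap K (TangentAlgebra K t s) a ∈ _
    rw [Algebra.algebraMap_eq_smul_one, ← h1]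
    exact Submodule.smul_mem _ a (Submodule.subset_span ⟨∅, rfl⟩)
  | add p q hp hq => rw [map_add]; exact add_mem hp hq
  | mul_X p i hp => rw [map_mul]; exact mul_mk_X_mem_span_e t s hp i

end TangentAlgebra

/-- The classes `e_A` of the square-free monomials `∏_{i ∈ A} X i`, indexed by
`A : Finset (Fin n)`, form a `K`-basis of the tangent algebra `K^n_{(t,s)}`;
in particular it is a free `K`-module of rank `2^n`. -/
theorem tangentAlgebra_basis (K : Type*) [CommRing K] (n : ℕ) (t s : Fin n → K) :
    ∃ b : Module.Basis (Finset (Fin n)) K (TangentAlgebra K t s),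
      ∀ A : Finset (Fin n),
        b A = Ideal.Quotient.mk (tangentIdeal K t s) (∏ i ∈ A, X i) :=
  ⟨.mk (TangentAlgebra.linearIndependent_e t s) (TangentAlgebra.span_e t s).ge,
    fun _ => Module.Basis.mk_apply ..⟩
end

section
/- For t, s : Fin n → K and t', s' : Fin m → K, there is a K-algebra isomorphism from the tangent algebra K^{n+m}_{(t ⊕ t', s ⊕ s')} (built from the concatenated parameter families on Fin (n+m)) to the tensor product K^n_{(t,s)} ⊗[K] K^m_{(t',s')}, sending the class of X (Fin.castAdd m i) to (class of X i) ⊗ 1 for i : Fin n and the class of X (Fin.natAdd n j) to 1 ⊗ (class of X j) for j : Fin m. In particular every n-th order tangent algebra is isomorphic to an n-fold tensor product of first-order tangent algebras. -/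
open MvPolynomial
open scoped TensorProduct

/-!
Sending `X (castAdd i) ↦ [X i] ⊗ 1` and `X (natAdd j) ↦ 1 ⊗ [X j]` kills the defining relations,
since each relation is the image of a relation of a factor; conversely the two factors map into
the big tangent algebra by their own universal properties, and these maps combine on the tensor
product because the target is commutative. Both composites fix the generators.
-/

namespace TangentAlgebra

variable {K : Type*} [CommRing K] {n m : ℕ}

noncomputable abbrev gen (t s : Fin n → K) (i : Fin n) : TangentAlgebra K t s :=
  Ideal.Quotient.mk (tangentIdeal K t s) (X i)

theorem gen_relation (t s : Fin n → K) (i : Fin n) :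
    (gen t s i - algebraMap K _ (t i)) * (gen t s i - algebraMap K _ (s i)) = 0 := by
  rw [← Ideal.Quotient.mk_algebraMap, ← Ideal.Quotient.mk_algebraMap, ← map_sub, ← map_sub,
    ← map_mul, Ideal.Quotient.eq_zero_iff_mem]
  exact Ideal.subset_span ⟨i, rfl⟩

section UniversalProperty

variable {t s : Fin n → K}

theorem map_gen_relation {S : Type*} [Ring S] [Algebra K S] (f : TangentAlgebra K t s →ₐ[K] S)
    (i : Fin n) :
    (f (gen t s i) - algebraMap K S (t i)) * (f (gen t s i) - algebraMap K S (s i)) = 0 := by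
  simpa using congrArg f (gen_relation t s i)

theorem algHom_ext {S : Type*} [Semiring S] [Algebra K S] {f g : TangentAlgebra K t s →ₐ[K] S}
    (h : ∀ i, f (gen t s i) = g (gen t s i)) : f = g :=
  Ideal.Quotient.algHom_ext K (MvPolynomial.algHom_ext h)

variable {S : Type*} [CommRing S] [Algebra K S] (x : Fin n → S)
  (hx : ∀ i, (x i - algebraMap K S (t i)) * (x i - algebraMap K S (s i)) = 0)

noncomputable def lift : TangentAlgebra K t s →ₐ[K] S :=
  Ideal.Quotient.liftₐ _ (aeval x) fun _ ha =>
    (Ideal.span_le (I := RingHom.ker (aeval x))).mpr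
      (by rintro _ ⟨i, rfl⟩; simpa [RingHom.mem_ker] using hx i) ha

@[simp]
theorem lift_gen (i : Fin n) : lift x hx (gen t s i) = x i :=
  aeval_X x i

end UniversalProperty

section Append

open Algebra.TensorProduct

variable (t s : Fin n → K) (t' s' : Fin m → K)

noncomputable def appendToTensor :
    TangentAlgebra K (Fin.append t t') (Fin.append s s') →ₐ[K]
      TangentAlgebra K t s ⊗[K] TangentAlgebra K t' s' :=
  lift (Fin.append (fun i => gen t s i ⊗ₜ[K] 1) (fun j => 1 ⊗ₜ[K] gen t' s' j)) fun k => by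
    induction k using Fin.addCases with
    | left i =>
      simpa using map_gen_relation (includeLeft :
        TangentAlgebra K t s →ₐ[K] TangentAlgebra K t s ⊗[K] TangentAlgebra K t' s') i
    | right j =>
      simpa using map_gen_relation (includeRight :
        TangentAlgebra K t' s' →ₐ[K] TangentAlgebra K t s ⊗[K] TangentAlgebra K t' s') j

noncomputable def tensorToAppend :
    TangentAlgebra K t s ⊗[K] TangentAlgebra K t' s' →ₐ[K]
      TangentAlgebra K (Fin.append t t') (Fin.append s s') :=
  Algebra.TensorProduct.lift
    (lift (fun i => gen _ _ (Fin.castAdd m i)) fun i => by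
      simpa using gen_relation (Fin.append t t') (Fin.append s s') (Fin.castAdd m i))
    (lift (fun j => gen _ _ (Fin.natAdd n j)) fun j => by
      simpa using gen_relation (Fin.append t t') (Fin.append s s') (Fin.natAdd n j))
    fun _ _ => Commute.all _ _

@[simp]
theorem appendToTensor_gen_castAdd (i : Fin n) :
    appendToTensor t s t' s' (gen _ _ (Fin.castAdd m i)) = gen t s i ⊗ₜ 1 := by
  simp [appendToTensor]

@[simp]
theorem appendToTensor_gen_natAdd (j : Fin m) :
    appendToTensor t s t' s' (gen _ _ (Fin.natAdd n j)) = 1 ⊗ₜ gen t' s' j := by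
  simp [appendToTensor]

noncomputable def appendEquivTensor :
    TangentAlgebra K (Fin.append t t') (Fin.append s s') ≃ₐ[K]
      TangentAlgebra K t s ⊗[K] TangentAlgebra K t' s' :=
  AlgEquiv.ofAlgHom (appendToTensor t s t' s') (tensorToAppend t s t' s')
    (by apply Algebra.TensorProduct.ext <;> apply algHom_ext <;> simp [tensorToAppend])
    (algHom_ext <| Fin.addCases (fun i => by simp [tensorToAppend])
      fun j => by simp [tensorToAppend])

end Append

end TangentAlgebra

/-- The tangent algebra for concatenated parameter families is `K`-algebra isomorphic to
the tensor product of the two tangent algebras, via `[X (castAdd m i)] ↦ [X i] ⊗ 1` and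
`[X (natAdd n j)] ↦ 1 ⊗ [X j]`. -/
theorem tangentAlgebra_append_iso_tensor (K : Type*) [CommRing K] (n m : ℕ)
    (t s : Fin n → K) (t' s' : Fin m → K) :
    ∃ φ : TangentAlgebra K (Fin.append t t') (Fin.append s s') ≃ₐ[K]
        TangentAlgebra K t s ⊗[K] TangentAlgebra K t' s',
      (∀ i : Fin n,
        φ (Ideal.Quotient.mk (tangentIdeal K (Fin.append t t') (Fin.append s s'))
            (X (Fin.castAdd m i))) =
          Ideal.Quotient.mk (tangentIdeal K t s) (X i) ⊗ₜ[K] 1) ∧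
      (∀ j : Fin m,
        φ (Ideal.Quotient.mk (tangentIdeal K (Fin.append t t') (Fin.append s s'))
            (X (Fin.natAdd n j))) =
          1 ⊗ₜ[K] Ideal.Quotient.mk (tangentIdeal K t' s') (X j)) :=
  ⟨TangentAlgebra.appendEquivTensor t s t' s', TangentAlgebra.appendToTensor_gen_castAdd t s t' s',
    TangentAlgebra.appendToTensor_gen_natAdd t s t' s'⟩
end

section
/- The first-order anchor, i.e. the K-algebra homomorphism Υ : A → K × K sending the class of a polynomial P to (P.eval s, P.eval t), is bijective if and only if t - s is a unit of K. -/
open Polynomial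

/-- The defining ideal of the first-order tangent algebra `K_{(t,s)}`. -/
noncomputable abbrev tIdeal (K : Type*) [CommRing K] (t s : K) : Ideal (Polynomial K) :=
  Ideal.span {(X - C s) * (X - C t)}

/-- The first-order tangent algebra `K_{(t,s)} = K[X] ⧸ ((X - C s) * (X - C t))`. -/
abbrev TangentAlgebra₁ (K : Type*) [CommRing K] (t s : K) :=
  Polynomial K ⧸ tIdeal K t s

/-! An element `[P]` of the anchor's kernel has roots `s` and `t`; when `t - s` is a unit the
factors `X - C s`, `X - C t` are coprime, so their product divides `P`. Surjectivity is linear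
interpolation through `(s, a)` and `(t, b)`. Conversely a preimage `P` of `(0, 1)` gives
`1 = P(t) - P(s)`, which is divisible by `t - s`. -/

section Interpolation

variable {K : Type*} [CommRing K] {s t : K}

theorem isUnit_sub_of_eval_eq_zero_of_eval_eq_one {P : K[X]} (hs : P.eval s = 0)
    (ht : P.eval t = 1) : IsUnit (t - s) :=
  isUnit_of_dvd_one (by simpa [hs, ht] using sub_dvd_eval_sub t s P)

theorem mul_X_sub_C_dvd_of_isRoot (h : IsUnit (t - s)) {P : K[X]} (hs : P.IsRoot s)
    (ht : P.IsRoot t) : (X - C s) * (X - C t) ∣ P :=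
  (isCoprime_X_sub_C_of_isUnit_sub h).symm.mul_dvd (dvd_iff_isRoot.mpr hs)
    (dvd_iff_isRoot.mpr ht)

theorem exists_eval_eq_of_isUnit_sub (h : IsUnit (t - s)) (a b : K) :
    ∃ P : K[X], P.eval s = a ∧ P.eval t = b := by
  obtain ⟨u, hu⟩ := h.exists_right_inv
  refine ⟨C a + C ((b - a) * u) * (X - C s), by simp, ?_⟩
  simp only [eval_add, eval_mul, eval_C, eval_sub, eval_X]
  linear_combination (b - a) * hu

end Interpolation

/-- The first-order anchor `Υ = (α, β) : K_{(t,s)} → K × K`, given by evaluation at `s`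
and at `t`, is bijective if and only if `t - s` is a unit of `K`. -/
theorem firstOrderAnchor_bijective_iff (K : Type*) [CommRing K] (t s : K)
    (α β : TangentAlgebra₁ K t s →ₐ[K] K)
    (hα : ∀ P : Polynomial K, α (Ideal.Quotient.mk (tIdeal K t s) P) = P.eval s)
    (hβ : ∀ P : Polynomial K, β (Ideal.Quotient.mk (tIdeal K t s) P) = P.eval t) :
    Function.Bijective (fun v : TangentAlgebra₁ K t s => (α v, β v)) ↔ IsUnit (t - s) := by
  change Function.Bijective (α.prod β) ↔ _
  have hΥ (P : K[X]) : α.prod β (Ideal.Quotient.mk _ P) = (P.eval s, P.eval t) := by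
    simp [hα, hβ]
  refine ⟨fun ⟨_, hsurj⟩ => ?_, fun h => ⟨?_, ?_⟩⟩
  · obtain ⟨v, hv⟩ := hsurj (0, 1)
    obtain ⟨P, rfl⟩ := Ideal.Quotient.mk_surjective v
    rw [hΥ, Prod.mk.injEq] at hv
    exact isUnit_sub_of_eval_eq_zero_of_eval_eq_one hv.1 hv.2
  · refine (injective_iff_map_eq_zero (α.prod β)).mpr fun v hv => ?_
    obtain ⟨P, rfl⟩ := Ideal.Quotient.mk_surjective v
    rw [hΥ, Prod.mk_eq_zero] at hv
    exact Ideal.Quotient.eq_zero_iff_mem.mpr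
      (Ideal.mem_span_singleton.mpr (mul_X_sub_C_dvd_of_isRoot h hv.1 hv.2))
  · rintro ⟨a, b⟩
    obtain ⟨P, hs, ht⟩ := exists_eval_eq_of_isUnit_sub h a b
    exact ⟨Ideal.Quotient.mk _ P, by rw [hΥ, hs, ht]⟩
end

section
/- The n-fold anchor Υ : K^n_{(t,s)} → (Finset (Fin n) → K) is bijective if and only if (t,s) is regular, i.e. if and only if t i - s i is a unit of K for every i : Fin n. -/
/-! When every `t i - s i` is a unit, the polynomials
`L_B = ∏_{i ∈ B} (X i - s i) / (t i - s i) * ∏_{i ∉ B} (t i - X i) / (t i - s i)` form the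
Lagrange basis of the vertices `v_B = (if i ∈ B then t i else s i)_i` of the cube: they sum to `1`,
`L_B (v_B') = δ_{B B'}`, and `(X i - v_B i) * L_B` lies in the tangent ideal. Hence
`P ≡ ∑_B P(v_B) L_B`, so `g ↦ ∑_B g B • L_B` is a two-sided inverse of the anchor.
Conversely, a preimage `P` of the indicator of `{B | i ∈ B}` takes the values `1` and `0` at the
vertices `v_{i}` and `v_∅`, which differ only in the `i`-th coordinate, so `t i - s i ∣ 1 - 0`. -/

open MvPolynomial

namespace MvPolynomial

variable {σ R : Type*} [CommRing R]

theorem eval_sub_eval_mem {I : Ideal R} {x y : σ → R} (h : ∀ i, x i - y i ∈ I)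
    (P : MvPolynomial σ R) : eval x P - eval y P ∈ I := by
  have hxy : Ideal.Quotient.mk I ∘ x = Ideal.Quotient.mk I ∘ y :=
    _root_.funext fun i => Ideal.Quotient.eq.mpr (h i)
  rw [← Ideal.Quotient.eq, map_eval, map_eval, hxy]

theorem sub_C_eval_mem_span_X_sub_C (x : σ → R) (P : MvPolynomial σ R) :
    P - C (eval x P) ∈ Ideal.span (Set.range fun i => X i - C (x i)) := by
  -- `P` and `C (eval x P)` are the values of `map C P` at the points `X` and `C ∘ x`.
  have := eval_sub_eval_mem (x := X) (y := C ∘ x)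
    (fun i => Ideal.subset_span (Set.mem_range_self i)) (map C P)
  rwa [eval_map, eval₂_eta, ← map_eval] at this

end MvPolynomial

open Finset

section

variable {K : Type*} [CommRing K] {n : ℕ} (t s : Fin n → K)

def cubeVertex (B : Finset (Fin n)) : Fin n → K := fun i => if i ∈ B then t i else s i

noncomputable def cubeLagrangeBasis (B : Finset (Fin n)) : MvPolynomial (Fin n) K :=
  (∏ i ∈ B, C (Ring.inverse (t i - s i)) * (X i - C (s i))) *
    ∏ i ∈ Bᶜ, C (Ring.inverse (t i - s i)) * (C (t i) - X i)

variable {t s}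

theorem sum_cubeLagrangeBasis (h : ∀ i, IsUnit (t i - s i)) :
    ∑ B, cubeLagrangeBasis t s B = 1 := by
  unfold cubeLagrangeBasis
  rw [← Fintype.prod_add]
  refine Fintype.prod_eq_one _ fun i => ?_
  rw [← mul_add, sub_add_sub_cancel', ← C_sub, ← C_mul, Ring.inverse_mul_cancel _ (h i), C_1]

theorem eval_cubeLagrangeBasis (h : ∀ i, IsUnit (t i - s i)) (B B' : Finset (Fin n)) :
    eval (cubeVertex t s B') (cubeLagrangeBasis t s B) = if B' = B then 1 else 0 := by
  have hin : ∀ i,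
      Ring.inverse (t i - s i) * (cubeVertex t s B' i - s i) = if i ∈ B' then 1 else 0 := by
    intro i
    unfold cubeVertex
    split_ifs <;> simp [Ring.inverse_mul_cancel _ (h i)]
  have hout : ∀ i,
      Ring.inverse (t i - s i) * (t i - cubeVertex t s B' i) = if i ∉ B' then 1 else 0 := by
    intro i
    unfold cubeVertex
    split_ifs <;> simp_all [Ring.inverse_mul_cancel _ (h i)]
  simp only [cubeLagrangeBasis, map_mul, map_prod, map_sub, eval_C, eval_X]
  simp only [hin, hout, prod_boole, ite_zero_mul_ite_zero, mul_one]
  congr 1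
  simp only [mem_compl, not_imp_not, eq_iff_iff]
  exact and_comm.trans Subset.antisymm_iff.symm

theorem X_sub_C_mul_cubeLagrangeBasis_mem (B : Finset (Fin n)) (i : Fin n) :
    (X i - C (cubeVertex t s B i)) * cubeLagrangeBasis t s B ∈ tangentIdeal K t s := by
  have hgen : (X i - C (t i)) * (X i - C (s i)) ∈ tangentIdeal K t s :=
    Ideal.subset_span ⟨i, rfl⟩
  refine Ideal.mem_of_dvd _ ?_ hgen
  unfold cubeVertex cubeLagrangeBasis
  split_ifs with hi
  · exact mul_dvd_mul_left _ <| dvd_mul_of_dvd_left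
      ((dvd_mul_left _ _).trans (dvd_prod_of_mem _ hi)) _
  · rw [mul_comm (X i - C (t i)), ← neg_dvd, ← mul_neg, neg_sub]
    exact mul_dvd_mul_left _ <| dvd_mul_of_dvd_right
      ((dvd_mul_left _ _).trans (dvd_prod_of_mem _ (mem_compl.mpr hi))) _

theorem sub_C_eval_mul_cubeLagrangeBasis_mem (P : MvPolynomial (Fin n) K) (B : Finset (Fin n)) :
    (P - C (eval (cubeVertex t s B) P)) * cubeLagrangeBasis t s B ∈ tangentIdeal K t s := by
  rw [← smul_eq_mul, ← Submodule.mem_colon_singleton]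
  refine Ideal.span_le.mpr ?_ (sub_C_eval_mem_span_X_sub_C _ P)
  rintro _ ⟨i, rfl⟩
  exact Submodule.mem_colon_singleton.mpr (X_sub_C_mul_cubeLagrangeBasis_mem B i)

theorem mk_eq_sum_eval_mul_cubeLagrangeBasis (h : ∀ i, IsUnit (t i - s i))
    (P : MvPolynomial (Fin n) K) :
    Ideal.Quotient.mk (tangentIdeal K t s) P =
      Ideal.Quotient.mk _ (∑ B, C (eval (cubeVertex t s B) P) * cubeLagrangeBasis t s B) := by
  rw [Ideal.Quotient.eq]
  have hsum : P - ∑ B, C (eval (cubeVertex t s B) P) * cubeLagrangeBasis t s B =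
      ∑ B, (P - C (eval (cubeVertex t s B) P)) * cubeLagrangeBasis t s B := by
    simp only [sub_mul, sum_sub_distrib, ← mul_sum, sum_cubeLagrangeBasis h, mul_one]
  rw [hsum]
  exact Ideal.sum_mem _ fun B _ => sub_C_eval_mul_cubeLagrangeBasis_mem P B

variable {Υ : TangentAlgebra K t s →ₐ[K] (Finset (Fin n) → K)}

theorem isUnit_sub_of_anchor_surjective
    (hΥ : ∀ P B, Υ (Ideal.Quotient.mk (tangentIdeal K t s) P) B = eval (cubeVertex t s B) P)
    (hsurj : Function.Surjective Υ) (i : Fin n) : IsUnit (t i - s i) := by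
  obtain ⟨x, hx⟩ := hsurj fun B => if i ∈ B then 1 else 0
  obtain ⟨P, rfl⟩ := Ideal.Quotient.mk_surjective x
  have hvertex : ∀ j, cubeVertex t s {i} j - cubeVertex t s ∅ j ∈ Ideal.span {t i - s i} := by
    intro j
    rcases eq_or_ne j i with rfl | hj
    · simp [cubeVertex]
    · simp [cubeVertex, hj]
  have hdiff := eval_sub_eval_mem hvertex P
  rw [← hΥ, ← hΥ, hx] at hdiff
  simp only [mem_singleton_self, if_true, notMem_empty, if_false, sub_zero] at hdiff
  exact isUnit_of_dvd_one (Ideal.mem_span_singleton.mp hdiff)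

theorem anchor_bijective_of_isUnit_sub
    (hΥ : ∀ P B, Υ (Ideal.Quotient.mk (tangentIdeal K t s) P) B = eval (cubeVertex t s B) P)
    (h : ∀ i, IsUnit (t i - s i)) : Function.Bijective Υ := by
  refine Function.bijective_iff_has_inverse.mpr
    ⟨fun g => Ideal.Quotient.mk _ (∑ B, C (g B) * cubeLagrangeBasis t s B),
      fun x => ?_, fun g => ?_⟩
  · obtain ⟨P, rfl⟩ := Ideal.Quotient.mk_surjective x
    simp only [hΥ]
    exact (mk_eq_sum_eval_mul_cubeLagrangeBasis h P).symm
  · funext B'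
    rw [hΥ]
    simp only [map_sum, map_mul, eval_C, eval_cubeLagrangeBasis h, mul_ite, mul_one, mul_zero,
      sum_ite_eq, mem_univ, if_true]

end

/-- The `n`-fold anchor `Υ : K^n_{(t,s)} → (Finset (Fin n) → K)` is bijective if and
only if `(t,s)` is regular, i.e. `t i - s i` is a unit of `K` for every `i`. -/
theorem anchor_bijective_iff_regular (K : Type*) [CommRing K] (n : ℕ) (t s : Fin n → K)
    (Υ : TangentAlgebra K t s →ₐ[K] (Finset (Fin n) → K))
    (hΥ : ∀ (P : MvPolynomial (Fin n) K) (B : Finset (Fin n)),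
      Υ (Ideal.Quotient.mk (tangentIdeal K t s) P) B =
        aeval (fun i => if i ∈ B then t i else s i) P) :
    Function.Bijective Υ ↔ ∀ i : Fin n, IsUnit (t i - s i) :=
  ⟨fun hbij => isUnit_sub_of_anchor_surjective hΥ hbij.2, anchor_bijective_of_isUnit_sub hΥ⟩
end

section
/- Let n ≥ 1 and a, b, c, d : Fin n → K. The matrix M : Matrix (Finset (Fin n)) (Finset (Fin n)) K with entries M A B = (∏_{i ∈ Aᶜ ∩ Bᶜ} a i) * (∏_{i ∈ B \ A} b i) * (∏_{i ∈ A \ B} c i) * (∏_{i ∈ A ∩ B} d i) (the n-fold Kronecker product of the 2×2 matrices [[a i, b i],[c i, d i]]) has determinant det M = (∏_{i} (a i * d i - b i * c i))^(2^(n-1)). -/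
open Matrix Kronecker

private def ent' {K : Type*} (a b c d : K) : Bool → Bool → K
  | false, false => a
  | false, true => b
  | true, false => c
  | true, true => d

private def finsetBool (n : ℕ) : Finset (Fin n) ≃ (Fin n → Bool) where
  toFun A i := decide (i ∈ A)
  invFun f := Finset.univ.filter (fun i => f i = true)
  left_inv A := by ext i; simp
  right_inv f := by ext i; simp

private lemma prod_split {K : Type*} [CommRing K] {n : ℕ} (A B : Finset (Fin n))
    (t : Fin n → K) :
    ∏ i, t i = (∏ i ∈ Aᶜ ∩ Bᶜ, t i) * (∏ i ∈ B \ A, t i) *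
      (∏ i ∈ A \ B, t i) * (∏ i ∈ A ∩ B, t i) := by
  have h1 : Disjoint (Aᶜ ∩ Bᶜ) (B \ A) := by
    rw [Finset.disjoint_left]; intro x hx hy
    simp at hx hy; exact hx.2 hy.1
  have h2 : Disjoint ((Aᶜ ∩ Bᶜ) ∪ (B \ A)) (A \ B) := by
    rw [Finset.disjoint_left]; intro x hx hy
    simp at hx hy; rcases hx with ⟨h,_⟩|⟨_,h⟩ <;> exact h hy.1
  have h3 : Disjoint ((Aᶜ ∩ Bᶜ) ∪ (B \ A) ∪ (A \ B)) (A ∩ B) := by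
    rw [Finset.disjoint_left]; intro x hx hy
    simp at hx hy; tauto
  rw [← Finset.prod_union h1, ← Finset.prod_union h2, ← Finset.prod_union h3]
  apply Finset.prod_congr _ (fun _ _ => rfl)
  ext x
  simp only [Finset.mem_union, Finset.mem_inter, Finset.mem_sdiff, Finset.mem_compl,
    Finset.mem_univ, iff_true]
  by_cases hA : x ∈ A <;> by_cases hB : x ∈ B <;> tauto

private lemma ent'_det {K : Type*} [CommRing K] (a b c d : K) :
    (Matrix.of (ent' a b c d)).det = a * d - b * c := by
  rw [← Matrix.det_reindex_self finTwoEquiv.symm (Matrix.of (ent' a b c d))]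
  rw [Matrix.det_fin_two]
  simp [ent', finTwoEquiv]

private theorem aux_det (K : Type*) [CommRing K] (n : ℕ) (a b c d : Fin n → K) :
    (Matrix.of fun f g : Fin n → Bool =>
      ∏ i, ent' (a i) (b i) (c i) (d i) (f i) (g i)).det
      = (∏ i : Fin n, (a i * d i - b i * c i)) ^ (2 ^ (n - 1)) := by
  induction n with
  | zero => simp
  | succ n ih =>
    rw [← Matrix.det_reindex_self (Fin.consEquiv (fun _ : Fin (n+1) => Bool)).symm]
    have hre : (Matrix.reindex (Fin.consEquiv (fun _ : Fin (n+1) => Bool)).symm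
        (Fin.consEquiv (fun _ : Fin (n+1) => Bool)).symm
        (Matrix.of fun f g : Fin (n+1) → Bool =>
          ∏ i, ent' (a i) (b i) (c i) (d i) (f i) (g i)))
        = (Matrix.of (ent' (a 0) (b 0) (c 0) (d 0))) ⊗ₖ
          (Matrix.of fun f g : Fin n → Bool =>
            ∏ i, ent' (a i.succ) (b i.succ) (c i.succ) (d i.succ) (f i) (g i)) := by
      ext ⟨x, f⟩ ⟨y, g⟩
      simp [Matrix.kroneckerMap_apply, Fin.consEquiv, Fin.prod_univ_succ]
    rw [hre, Matrix.det_kronecker, ent'_det, ih]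
    rw [Fin.prod_univ_succ, mul_pow]
    simp only [Fintype.card_fun, Fintype.card_bool, Fintype.card_fin, Nat.add_sub_cancel]
    congr 1
    cases n with
    | zero => simp
    | succ m =>
      rw [← pow_mul, Nat.add_sub_cancel, ← pow_succ]

/-- The determinant of the `n`-fold Kronecker product of the `2×2` matrices
`[[a i, b i],[c i, d i]]` (reindexed by subsets of `Fin n`) is
`(∏ i, (a i * d i - b i * c i))^(2^(n-1))`. -/
theorem kroneckerCube_det (K : Type*) [CommRing K] (n : ℕ) (hn : 1 ≤ n)
    (a b c d : Fin n → K)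
    (M : Matrix (Finset (Fin n)) (Finset (Fin n)) K)
    (hM : ∀ A B : Finset (Fin n),
      M A B = (∏ i ∈ Aᶜ ∩ Bᶜ, a i) * (∏ i ∈ B \ A, b i) *
        (∏ i ∈ A \ B, c i) * (∏ i ∈ A ∩ B, d i)) :
    M.det = (∏ i : Fin n, (a i * d i - b i * c i)) ^ (2 ^ (n - 1)) := by
  rw [← Matrix.det_reindex_self (finsetBool n) M, ← aux_det K n a b c d]
  congr 1
  ext f g
  simp only [Matrix.reindex_apply, Matrix.submatrix_apply, Matrix.of_apply]
  set A := (finsetBool n).symm f with hA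
  set B := (finsetBool n).symm g with hB
  have hf : ∀ i, f i = decide (i ∈ A) := by
    intro i; rw [hA]; simp [finsetBool]
  have hg : ∀ i, g i = decide (i ∈ B) := by
    intro i; rw [hB]; simp [finsetBool]
  rw [hM A B, prod_split A B (fun i => ent' (a i) (b i) (c i) (d i) (f i) (g i))]
  congr 1
  · congr 1
    · congr 1
      · refine Finset.prod_congr rfl fun i hi => ?_
        simp only [Finset.mem_inter, Finset.mem_compl] at hi
        simp [hf i, hg i, hi.1, hi.2, ent']
      · refine Finset.prod_congr rfl fun i hi => ?_
        simp only [Finset.mem_sdiff] at hi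
        simp [hf i, hg i, hi.1, hi.2, ent']
    · refine Finset.prod_congr rfl fun i hi => ?_
      simp only [Finset.mem_sdiff] at hi
      simp [hf i, hg i, hi.1, hi.2, ent']
  · refine Finset.prod_congr rfl fun i hi => ?_
    simp only [Finset.mem_inter] at hi
    simp [hf i, hg i, hi.1, hi.2, ent']
end

section
/- Let a, b, c, d : Fin n → K and let M : Matrix (Finset (Fin n)) (Finset (Fin n)) K have entries M A B = (∏_{i ∈ Aᶜ ∩ Bᶜ} a i) * (∏_{i ∈ B \ A} b i) * (∏_{i ∈ A \ B} c i) * (∏_{i ∈ A ∩ B} d i). Define J : Matrix (Finset (Fin n)) (Finset (Fin n)) K by J A B = (-1)^{n - |B|} if A = Bᶜ and J A B = 0 otherwise. Then, without any invertibility hypothesis, M * J * Mᵀ * ((-1)^n • J) = (∏_{i} (a i * d i - b i * c i)) • 1. (Here (-1)^n • J = J⁻¹, since J * J = (-1)^n • 1.) -/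
section KroneckerAux

variable {K : Type*} [CommRing K] {n : ℕ}

private lemma prod_ite_split (A B : Finset (Fin n)) (f g : Fin n → K) :
    (∏ i ∈ B, (if i ∈ A then f i else g i)) = (∏ i ∈ B ∩ A, f i) * ∏ i ∈ B \ A, g i := by
  rw [Finset.prod_ite, Finset.filter_mem_eq_inter]
  congr 1
  apply Finset.prod_congr _ (fun _ _ => rfl)
  ext x; simp [Finset.mem_sdiff]

private lemma key_sum (a b c d : Fin n → K) (A D : Finset (Fin n)) :
    (∑ B : Finset (Fin n),
      (∏ i ∈ B, ((-1) * (if i ∈ A then d i else b i) * (if i ∈ D then a i else c i))) *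
      (∏ i ∈ Bᶜ, ((if i ∈ A then c i else a i) * (if i ∈ D then b i else d i))))
    = if A = D then (-1 : K) ^ A.card * ∏ i, (a i * d i - b i * c i) else 0 := by
  have hps : (Finset.univ : Finset (Finset (Fin n))) = Finset.univ.powerset :=
    (Finset.powerset_univ).symm
  calc (∑ B : Finset (Fin n),
      (∏ i ∈ B, ((-1) * (if i ∈ A then d i else b i) * (if i ∈ D then a i else c i))) *
      (∏ i ∈ Bᶜ, ((if i ∈ A then c i else a i) * (if i ∈ D then b i else d i))))
      = ∑ B ∈ Finset.univ.powerset,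
        (∏ i ∈ B, ((-1) * (if i ∈ A then d i else b i) * (if i ∈ D then a i else c i))) *
        (∏ i ∈ Finset.univ \ B, ((if i ∈ A then c i else a i) * (if i ∈ D then b i else d i))) := by
        rw [← hps]
        exact Finset.sum_congr rfl (fun B _ => by rw [Finset.compl_eq_univ_sdiff])
    _ = ∏ i : Fin n, ((-1) * (if i ∈ A then d i else b i) * (if i ∈ D then a i else c i) +
          (if i ∈ A then c i else a i) * (if i ∈ D then b i else d i)) := by
        rw [Finset.prod_add]
    _ = if A = D then (-1 : K) ^ A.card * ∏ i, (a i * d i - b i * c i) else 0 := by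
        by_cases h : A = D
        · subst h
          simp only [if_pos rfl]
          have : ∀ i : Fin n, ((-1) * (if i ∈ A then d i else b i) * (if i ∈ A then a i else c i) +
              (if i ∈ A then c i else a i) * (if i ∈ A then b i else d i))
              = (if i ∈ A then (-1 : K) else 1) * (a i * d i - b i * c i) := by
            intro i; by_cases hi : i ∈ A <;> simp [hi] <;> ring
          rw [Finset.prod_congr rfl (fun i _ => this i), Finset.prod_mul_distrib]
          congr 1
          rw [prod_ite_split, Finset.univ_inter, Finset.prod_const, Finset.prod_const, one_pow,
            mul_one]
        · rw [if_neg h]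
          have : ∃ x, ¬ (x ∈ A ↔ x ∈ D) := by
            by_contra hc
            push_neg at hc
            exact h (Finset.ext fun x => hc x)
          obtain ⟨x, hx⟩ := this
          apply Finset.prod_eq_zero (Finset.mem_univ x)
          rw [iff_iff_implies_and_implies, not_and_or] at hx
          rcases hx with hx | hx
          · push_neg at hx
            simp [hx.1, hx.2]; ring
          · push_neg at hx
            simp [hx.1, hx.2]; ring

private lemma summand_eq (a b c d : Fin n → K) (A D B : Finset (Fin n)) :
    ((∏ i ∈ Aᶜ ∩ Bᶜ, a i) * (∏ i ∈ B \ A, b i) * (∏ i ∈ A \ B, c i) * (∏ i ∈ A ∩ B, d i))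
      * (-1 : K) ^ B.card *
    ((∏ i ∈ Dᶜᶜ ∩ Bᶜᶜ, a i) * (∏ i ∈ Bᶜ \ Dᶜ, b i) * (∏ i ∈ Dᶜ \ Bᶜ, c i) * (∏ i ∈ Dᶜ ∩ Bᶜ, d i))
    = (∏ i ∈ B, ((-1) * (if i ∈ A then d i else b i) * (if i ∈ D then a i else c i))) *
      (∏ i ∈ Bᶜ, ((if i ∈ A then c i else a i) * (if i ∈ D then b i else d i))) := by
  have e1 : Aᶜ ∩ Bᶜ = Bᶜ \ A := by
    ext x; simp only [Finset.mem_inter, Finset.mem_sdiff, Finset.mem_compl, compl_compl]; tauto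
  have e2 : A \ B = Bᶜ ∩ A := by
    ext x; simp only [Finset.mem_inter, Finset.mem_sdiff, Finset.mem_compl, compl_compl]; tauto
  have e3 : A ∩ B = B ∩ A := Finset.inter_comm _ _
  have e4 : Dᶜᶜ ∩ Bᶜᶜ = B ∩ D := by
    ext x; simp only [Finset.mem_inter, Finset.mem_sdiff, Finset.mem_compl, compl_compl]; tauto
  have e5 : Bᶜ \ Dᶜ = Bᶜ ∩ D := by
    ext x; simp only [Finset.mem_inter, Finset.mem_sdiff, Finset.mem_compl, compl_compl]; tauto
  have e6 : Dᶜ \ Bᶜ = B \ D := by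
    ext x; simp only [Finset.mem_inter, Finset.mem_sdiff, Finset.mem_compl, compl_compl]; tauto
  have e7 : Dᶜ ∩ Bᶜ = Bᶜ \ D := by
    ext x; simp only [Finset.mem_inter, Finset.mem_sdiff, Finset.mem_compl, compl_compl]; tauto
  rw [e1, e2, e3, e4, e5, e6, e7]
  simp only [Finset.prod_mul_distrib, prod_ite_split, Finset.prod_const]
  ring

end KroneckerAux

/-- Without any invertibility hypothesis, the `n`-fold Kronecker product `M` of the
`2×2` matrices `[[a i, b i],[c i, d i]]` satisfies
`M * J * Mᵀ * ((-1)^n • J) = (∏ i, (a i * d i - b i * c i)) • 1`,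
where `J A B = (-1)^{n - |B|}` if `A = Bᶜ` and `0` otherwise. -/
theorem kroneckerCube_symplectic_adjugate (K : Type*) [CommRing K] (n : ℕ)
    (a b c d : Fin n → K)
    (M J : Matrix (Finset (Fin n)) (Finset (Fin n)) K)
    (hM : ∀ A B : Finset (Fin n),
      M A B = (∏ i ∈ Aᶜ ∩ Bᶜ, a i) * (∏ i ∈ B \ A, b i) *
        (∏ i ∈ A \ B, c i) * (∏ i ∈ A ∩ B, d i))
    (hJ : ∀ A B : Finset (Fin n),
      J A B = if A = Bᶜ then (-1 : K) ^ (n - B.card) else 0) :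
    M * J * M.transpose * ((-1 : K) ^ n • J) =
      (∏ i : Fin n, (a i * d i - b i * c i)) • (1 : Matrix (Finset (Fin n)) (Finset (Fin n)) K) := by
  have e1 : ∀ X B : Finset (Fin n), (M * J) X B = M X Bᶜ * (-1 : K) ^ (n - B.card) := by
    intro X B
    rw [Matrix.mul_apply, Finset.sum_eq_single Bᶜ]
    · rw [hJ, if_pos rfl]
    · intro C _ hC; rw [hJ, if_neg hC, mul_zero]
    · simp
  have e2 : ∀ A C : Finset (Fin n), (M * J * M.transpose) A C
      = ∑ B : Finset (Fin n), M A Bᶜ * (-1 : K) ^ (n - B.card) * M C B := by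
    intro A C
    rw [Matrix.mul_apply]
    exact Finset.sum_congr rfl fun B _ => by rw [e1, Matrix.transpose_apply]
  have e3 : ∀ A D : Finset (Fin n),
      (M * J * M.transpose * ((-1 : K) ^ n • J)) A D
        = (M * J * M.transpose) A Dᶜ * ((-1 : K) ^ n * (-1 : K) ^ (n - D.card)) := by
    intro A D
    rw [Matrix.mul_apply, Finset.sum_eq_single Dᶜ]
    · rw [Matrix.smul_apply, hJ, if_pos rfl, smul_eq_mul]
    · intro C _ hC; rw [Matrix.smul_apply, hJ, if_neg hC, smul_zero, mul_zero]
    · simp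
  have cardle : ∀ S : Finset (Fin n), S.card ≤ n := fun S =>
    le_trans (Finset.card_le_univ S) (by simp)
  have reidx : ∀ A D : Finset (Fin n),
      (∑ B : Finset (Fin n), M A Bᶜ * (-1 : K) ^ (n - B.card) * M Dᶜ B)
      = ∑ B : Finset (Fin n), M A B * (-1 : K) ^ B.card * M Dᶜ Bᶜ := by
    intro A D
    refine (Fintype.sum_bijective compl (compl_involutive.bijective) _ _ fun B => ?_).symm
    rw [compl_compl]
    congr 2
    rw [Finset.card_compl, Fintype.card_fin, Nat.sub_sub_self (cardle B)]
  ext A D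
  rw [e3, e2, reidx]
  have hsum : (∑ B : Finset (Fin n), M A B * (-1 : K) ^ B.card * M Dᶜ Bᶜ)
      = if A = D then (-1 : K) ^ A.card * ∏ i, (a i * d i - b i * c i) else 0 := by
    rw [← key_sum a b c d A D]
    exact Finset.sum_congr rfl fun B _ => by rw [hM, hM, summand_eq]
  rw [hsum, Matrix.smul_apply, Matrix.one_apply, smul_eq_mul]
  by_cases hAD : A = D
  · subst hAD
    rw [if_pos rfl, if_pos rfl, mul_one]
    have h1 : (-1 : K) ^ (n - A.card) * (-1 : K) ^ A.card = (-1 : K) ^ n := by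
      rw [← pow_add, Nat.sub_add_cancel (cardle A)]
    have h2 : (-1 : K) ^ n * (-1 : K) ^ n = 1 := by
      rw [← mul_pow]; norm_num
    calc ((-1 : K) ^ A.card * ∏ i, (a i * d i - b i * c i)) *
          ((-1 : K) ^ n * (-1 : K) ^ (n - A.card))
        = (∏ i, (a i * d i - b i * c i)) *
            (((-1 : K) ^ (n - A.card) * (-1 : K) ^ A.card) * (-1 : K) ^ n) := by ring
      _ = ∏ i, (a i * d i - b i * c i) := by rw [h1, h2, mul_one]
  · rw [if_neg hAD, if_neg hAD, zero_mul, mul_zero]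
end

section
/- In the first-order tangent algebra A = K[X]⧸((X - C s)(X - C t)), the multiplication satisfies the fundamental relation: for all v, w ∈ A, w * v = α(w) • v - algebraMap K A (α(w) * β(v)) + β(v) • w. -/
open Polynomial

/-! For polynomials `Q, P`, the root `s` of `Q - Q(s)` and the root `t` of `P - P(t)` make
`(Q - Q(s)) * (P - P(t))` a multiple of `(X - s) * (X - t)`, so `(w - α w) * (v - β v) = 0` in
`K_{(t,s)}`; expanding this product is the fundamental relation. -/

theorem mul_eq_of_sub_algebraMap_mul_sub_algebraMap_eq_zero {K A : Type*} [CommSemiring K]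
    [Ring A] [Algebra K A] {x y : A} {a b : K}
    (h : (x - algebraMap K A a) * (y - algebraMap K A b) = 0) :
    x * y = a • y - algebraMap K A (a * b) + b • x := by
  rw [Algebra.smul_def, Algebra.smul_def, Algebra.commutes b x, map_mul, ← sub_eq_zero, ← h]
  noncomm_ring

theorem TangentAlgebra₁.sub_eval_mul_sub_eval_eq_zero {K : Type*} [CommRing K] (t s : K)
    (P Q : K[X]) :
    (Ideal.Quotient.mk (tIdeal K t s) P - algebraMap K _ (P.eval s)) *
      (Ideal.Quotient.mk (tIdeal K t s) Q - algebraMap K _ (Q.eval t)) = 0 := by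
  rw [← Ideal.Quotient.mk_algebraMap, ← Ideal.Quotient.mk_algebraMap, Polynomial.algebraMap_eq,
    ← map_sub, ← map_sub, ← map_mul, Ideal.Quotient.eq_zero_iff_mem, Ideal.mem_span_singleton]
  exact mul_dvd_mul X_sub_C_dvd_sub_C_eval X_sub_C_dvd_sub_C_eval

/-- The fundamental relation of the first-order tangent algebra:
`w * v = α(w) • v - algebraMap K A (α(w) * β(v)) + β(v) • w`. -/
theorem fundamental_relation (K : Type*) [CommRing K] (t s : K)
    (α β : TangentAlgebra₁ K t s →ₐ[K] K)
    (hα : ∀ P : Polynomial K, α (Ideal.Quotient.mk (tIdeal K t s) P) = P.eval s)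
    (hβ : ∀ P : Polynomial K, β (Ideal.Quotient.mk (tIdeal K t s) P) = P.eval t) :
    ∀ v w : TangentAlgebra₁ K t s,
      w * v = α w • v - algebraMap K (TangentAlgebra₁ K t s) (α w * β v) + β v • w := by
  intro v w
  obtain ⟨P, rfl⟩ := Ideal.Quotient.mk_surjective v
  obtain ⟨Q, rfl⟩ := Ideal.Quotient.mk_surjective w
  rw [hα, hβ]
  exact mul_eq_of_sub_algebraMap_mul_sub_algebraMap_eq_zero
    (TangentAlgebra₁.sub_eval_mul_sub_eval_eq_zero t s Q P)
end

section
/- In the first-order tangent algebra A = K[X]⧸((X - C s)(X - C t)), the map κ : A → A defined by κ(v) = algebraMap K A (α(v) + β(v)) - v is a K-algebra homomorphism (hence, being involutive, a K-algebra automorphism): κ(1) = 1, κ(v * w) = κ(v) * κ(w), κ(κ(v)) = v for all v, w ∈ A, and it exchanges source and target: α(κ(v)) = β(v) and β(κ(v)) = α(v). -/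
/-!
Writing `a = α v`, `b = β v`, the map `κ v = a + b - v` exchanges the two roots of `v`, which
satisfies `(v - a) * (v - b) = 0`. More generally `(v - α v) * (w - β w) = 0` for all `v, w`
in `K_{(t,s)}`, since for representatives `P, Q` the two factors are divisible by `X - C s`
and `X - C t` respectively. Summing this identity for `(v, w)` and `(w, v)` is exactly what
multiplicativity of `κ` needs.
-/

open Polynomial

namespace AlgHom

variable {K A : Type*} [CommRing K] [CommRing A] [Algebra K A] (α β : A →ₐ[K] K)

def reflection (v : A) : A :=
  algebraMap K A (α v + β v) - v

theorem reflection_apply_left (v : A) : α (reflection α β v) = β v := by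
  simp [reflection]

theorem reflection_apply_right (v : A) : β (reflection α β v) = α v := by
  simp [reflection]

theorem reflection_one : reflection α β (1 : A) = 1 := by
  rw [reflection, map_one, map_one, map_add, map_one, add_sub_cancel_right]

theorem reflection_involutive : Function.Involutive (reflection α β : A → A) := by
  intro v
  rw [reflection, reflection_apply_left, reflection_apply_right, add_comm, reflection,
    sub_sub_cancel]

theorem reflection_mul
    (h : ∀ v w : A, (v - algebraMap K A (α v)) * (w - algebraMap K A (β w)) = 0) (v w : A) :
    reflection α β (v * w) = reflection α β v * reflection α β w := by
  simp only [reflection, map_mul, map_add]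
  linear_combination -(h v w) - h w v

end AlgHom

theorem TangentAlgebra₁.sub_mul_sub_eq_zero {K : Type*} [CommRing K] {t s : K}
    (α β : TangentAlgebra₁ K t s →ₐ[K] K)
    (hα : ∀ P : Polynomial K, α (Ideal.Quotient.mk (tIdeal K t s) P) = P.eval s)
    (hβ : ∀ P : Polynomial K, β (Ideal.Quotient.mk (tIdeal K t s) P) = P.eval t)
    (v w : TangentAlgebra₁ K t s) :
    (v - algebraMap K _ (α v)) * (w - algebraMap K _ (β w)) = 0 := by
  obtain ⟨P, rfl⟩ := Ideal.Quotient.mk_surjective v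
  obtain ⟨Q, rfl⟩ := Ideal.Quotient.mk_surjective w
  rw [hα, hβ, ← Ideal.Quotient.mk_algebraMap, ← Ideal.Quotient.mk_algebraMap,
    Polynomial.algebraMap_eq, ← map_sub, ← map_sub, ← map_mul,
    Ideal.Quotient.eq_zero_iff_mem, Ideal.mem_span_singleton]
  exact mul_dvd_mul X_sub_C_dvd_sub_C_eval X_sub_C_dvd_sub_C_eval

/-- The map `κ(v) = algebraMap K A (α(v) + β(v)) - v` is an involutive `K`-algebra
automorphism of the first-order tangent algebra exchanging source and target. -/
theorem kappa_is_involutive_automorphism (K : Type*) [CommRing K] (t s : K)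
    (α β : TangentAlgebra₁ K t s →ₐ[K] K)
    (hα : ∀ P : Polynomial K, α (Ideal.Quotient.mk (tIdeal K t s) P) = P.eval s)
    (hβ : ∀ P : Polynomial K, β (Ideal.Quotient.mk (tIdeal K t s) P) = P.eval t)
    (κ : TangentAlgebra₁ K t s → TangentAlgebra₁ K t s)
    (hκ : ∀ v, κ v = algebraMap K (TangentAlgebra₁ K t s) (α v + β v) - v) :
    κ 1 = 1 ∧ (∀ v w, κ (v * w) = κ v * κ w) ∧ (∀ v, κ (κ v) = v) ∧
      (∀ v, α (κ v) = β v) ∧ (∀ v, β (κ v) = α v) := by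
  obtain rfl : κ = α.reflection β := funext hκ
  exact ⟨α.reflection_one β,
    α.reflection_mul β (TangentAlgebra₁.sub_mul_sub_eq_zero α β hα hβ),
    α.reflection_involutive β, α.reflection_apply_left β, α.reflection_apply_right β⟩
end

section
/- In the first-order tangent algebra A = K[X]⧸((X - C s)(X - C t)), an element v ∈ A is a unit if and only if α(v) * β(v) is a unit of K; moreover, if u ∈ K satisfies (α(v) * β(v)) * u = 1, then v * (u • κ(v)) = 1, where κ(v) = algebraMap K A (α(v) + β(v)) - v, so that v⁻¹ = u • κ(v). -/
open Polynomial

/-! Writing `a = P(s)` and `b = P(t)`, one has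
`P * (a + b - P) - a * b = -(P - a) * (P - b)`, and `P - a`, `P - b` are divisible by `X - s`,
`X - t` respectively. So in `K_{(t,s)}` every `v` satisfies `v * (α v + β v - v) = α v * β v`:
`v` is invertible as soon as the scalar `α v * β v` is, with inverse `(α v * β v)⁻¹ • (α v + β v - v)`.
Conversely `α` and `β` carry units to units. -/

theorem Polynomial.X_sub_C_mul_X_sub_C_dvd {R : Type*} [CommRing R] (P : R[X]) (a b : R) :
    (X - C a) * (X - C b) ∣ P * (C (P.eval a + P.eval b) - P) - C (P.eval a * P.eval b) := by
  have h : P * (C (P.eval a + P.eval b) - P) - C (P.eval a * P.eval b)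
      = -((P - C (P.eval a)) * (P - C (P.eval b))) := by
    simp only [C_add, C_mul]
    ring
  rw [h, dvd_neg]
  exact mul_dvd_mul X_sub_C_dvd_sub_C_eval X_sub_C_dvd_sub_C_eval

section

variable {R A : Type*} [CommRing R] [CommRing A] [Algebra R A]

theorem mul_smul_eq_one_of_mul_eq_algebraMap {v w : A} {d u : R}
    (h : v * w = algebraMap R A d) (hu : d * u = 1) : v * (u • w) = 1 := by
  rw [mul_smul_comm, h, Algebra.smul_def, ← map_mul, mul_comm, hu, map_one]

theorem isUnit_iff_of_mul_eq_algebraMap (f g : A →ₐ[R] R) {v w : A}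
    (h : v * w = algebraMap R A (f v * g v)) : IsUnit v ↔ IsUnit (f v * g v) := by
  refine ⟨fun hv => (hv.map f).mul (hv.map g), fun ⟨d, hd⟩ => ?_⟩
  exact IsUnit.of_mul_eq_one _ (mul_smul_eq_one_of_mul_eq_algebraMap h (hd ▸ d.mul_inv))

end

theorem TangentAlgebra₁.mul_algebraMap_add_sub_self {K : Type*} [CommRing K] {t s : K}
    (α β : TangentAlgebra₁ K t s →ₐ[K] K)
    (hα : ∀ P : K[X], α (Ideal.Quotient.mk (tIdeal K t s) P) = P.eval s)
    (hβ : ∀ P : K[X], β (Ideal.Quotient.mk (tIdeal K t s) P) = P.eval t)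
    (v : TangentAlgebra₁ K t s) :
    v * (algebraMap K (TangentAlgebra₁ K t s) (α v + β v) - v)
      = algebraMap K (TangentAlgebra₁ K t s) (α v * β v) := by
  obtain ⟨P, rfl⟩ := Ideal.Quotient.mk_surjective v
  rw [hα, hβ, ← Ideal.Quotient.mk_algebraMap, ← Ideal.Quotient.mk_algebraMap,
    Polynomial.algebraMap_eq, ← map_sub, ← map_mul, Ideal.Quotient.eq, Ideal.mem_span_singleton]
  exact X_sub_C_mul_X_sub_C_dvd P s t

/-- An element `v` of the first-order tangent algebra is a unit iff `α(v) * β(v)` is a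
unit of `K`; moreover if `(α(v) * β(v)) * u = 1` then `v * (u • κ(v)) = 1`, where
`κ(v) = algebraMap K A (α(v) + β(v)) - v`, so `v⁻¹ = u • κ(v)`. -/
theorem isUnit_iff_and_inverse_formula (K : Type*) [CommRing K] (t s : K)
    (α β : TangentAlgebra₁ K t s →ₐ[K] K)
    (hα : ∀ P : Polynomial K, α (Ideal.Quotient.mk (tIdeal K t s) P) = P.eval s)
    (hβ : ∀ P : Polynomial K, β (Ideal.Quotient.mk (tIdeal K t s) P) = P.eval t) :
    ∀ v : TangentAlgebra₁ K t s,
      (IsUnit v ↔ IsUnit (α v * β v)) ∧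
      (∀ u : K, (α v * β v) * u = 1 →
        v * (u • (algebraMap K (TangentAlgebra₁ K t s) (α v + β v) - v)) = 1) := by
  intro v
  have key := TangentAlgebra₁.mul_algebraMap_add_sub_self α β hα hβ v
  exact ⟨isUnit_iff_of_mul_eq_algebraMap α β key,
    fun u hu => mul_smul_eq_one_of_mul_eq_algebraMap key hu⟩
end

section
/- In the first-order tangent algebra A = K[X]⧸((X - C s)(X - C t)), define a partial product u ⋆ w := u - algebraMap K A (α(u)) + w for u, w ∈ A with α(u) = β(w), and κ(u) := algebraMap K A (α(u) + β(u)) - u. Then A is a groupoid with source α, target β, units algebraMap K A λ (λ ∈ K), and inversion κ; explicitly: (i) if α(u) = β(w) then α(u ⋆ w) = α(w) and β(u ⋆ w) = β(u); (ii) if α(u) = β(w) and α(w) = β(z) then (u ⋆ w) ⋆ z = u ⋆ (w ⋆ z); (iii) u ⋆ algebraMap K A (α(u)) = u and algebraMap K A (β(u)) ⋆ u = u; (iv) u ⋆ κ(u) = algebraMap K A (β(u)) and κ(u) ⋆ u = algebraMap K A (α(u)). -/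
open Polynomial

/-!
Since `α` and `β` are additive and fix the scalars `algebraMap K A`, one has `α (u ⋆ w) = α w`
and `β (u ⋆ w) = β u - α u + β w`; the groupoid laws then reduce to additive identities in any
`K`-algebra.
-/

section Groupoid

variable {K A : Type*} [CommRing K] [Ring A] [Algebra K A]

def groupoidMul (α : A →ₐ[K] K) (u w : A) : A :=
  u - algebraMap K A (α u) + w

def groupoidInv (α β : A →ₐ[K] K) (u : A) : A :=
  algebraMap K A (α u + β u) - u

variable (α β : A →ₐ[K] K)

theorem map_groupoidMul (u w : A) : β (groupoidMul α u w) = β u - α u + β w := by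
  simp [groupoidMul]

theorem source_groupoidMul (u w : A) : α (groupoidMul α u w) = α w := by
  simp [map_groupoidMul]

theorem target_groupoidMul {u w : A} (h : α u = β w) : β (groupoidMul α u w) = β u := by
  simp [map_groupoidMul, h]

theorem groupoidMul_assoc (u w z : A) :
    groupoidMul α (groupoidMul α u w) z = groupoidMul α u (groupoidMul α w z) := by
  calc groupoidMul α (groupoidMul α u w) z
      = groupoidMul α u w - algebraMap K A (α w) + z := by rw [groupoidMul, source_groupoidMul]
    _ = groupoidMul α u (groupoidMul α w z) := by simp only [groupoidMul]; abel

theorem groupoidMul_algebraMap_source (u : A) : groupoidMul α u (algebraMap K A (α u)) = u := by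
  simp [groupoidMul]

theorem algebraMap_target_groupoidMul (u : A) : groupoidMul α (algebraMap K A (β u)) u = u := by
  simp [groupoidMul]

theorem source_groupoidInv (u : A) : α (groupoidInv α β u) = β u := by
  simp [groupoidInv]

theorem groupoidMul_groupoidInv (u : A) :
    groupoidMul α u (groupoidInv α β u) = algebraMap K A (β u) := by
  simp only [groupoidMul, groupoidInv, map_add]
  abel

theorem groupoidInv_groupoidMul (u : A) :
    groupoidMul α (groupoidInv α β u) u = algebraMap K A (α u) := by
  rw [groupoidMul, source_groupoidInv, groupoidInv, map_add]
  abel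

end Groupoid

theorem tangentAlgebra_groupoid_general (K : Type*) [CommRing K] (t s : K)
    (α β : TangentAlgebra₁ K t s →ₐ[K] K)
    (star : TangentAlgebra₁ K t s → TangentAlgebra₁ K t s → TangentAlgebra₁ K t s)
    (hstar : ∀ u w, star u w = u - algebraMap K (TangentAlgebra₁ K t s) (α u) + w)
    (κ : TangentAlgebra₁ K t s → TangentAlgebra₁ K t s)
    (hκ : ∀ u, κ u = algebraMap K (TangentAlgebra₁ K t s) (α u + β u) - u) :
    (∀ u w, α u = β w → α (star u w) = α w ∧ β (star u w) = β u) ∧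
    (∀ u w z, α u = β w → α w = β z → star (star u w) z = star u (star w z)) ∧
    (∀ u, star u (algebraMap K (TangentAlgebra₁ K t s) (α u)) = u ∧
          star (algebraMap K (TangentAlgebra₁ K t s) (β u)) u = u) ∧
    (∀ u, star u (κ u) = algebraMap K (TangentAlgebra₁ K t s) (β u) ∧
          star (κ u) u = algebraMap K (TangentAlgebra₁ K t s) (α u)) := by
  obtain rfl : star = groupoidMul α := funext₂ hstar
  obtain rfl : κ = groupoidInv α β := funext hκ
  exact ⟨fun u w h => ⟨source_groupoidMul α u w, target_groupoidMul α β h⟩,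
    fun u w z _ _ => groupoidMul_assoc α u w z,
    fun u => ⟨groupoidMul_algebraMap_source α u, algebraMap_target_groupoidMul α β u⟩,
    fun u => ⟨groupoidMul_groupoidInv α β u, groupoidInv_groupoidMul α β u⟩⟩

/-- The first-order tangent algebra is a groupoid for the partial product
`u ⋆ w = u - algebraMap K A (α u) + w` (defined when `α u = β w`), with source `α`,
target `β`, units `algebraMap K A λ`, and inversion `κ u = algebraMap K A (α u + β u) - u`. -/
theorem tangentAlgebra_groupoid (K : Type*) [CommRing K] (t s : K)
    (α β : TangentAlgebra₁ K t s →ₐ[K] K)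
    (hα : ∀ P : Polynomial K, α (Ideal.Quotient.mk (tIdeal K t s) P) = P.eval s)
    (hβ : ∀ P : Polynomial K, β (Ideal.Quotient.mk (tIdeal K t s) P) = P.eval t)
    (star : TangentAlgebra₁ K t s → TangentAlgebra₁ K t s → TangentAlgebra₁ K t s)
    (hstar : ∀ u w, star u w = u - algebraMap K (TangentAlgebra₁ K t s) (α u) + w)
    (κ : TangentAlgebra₁ K t s → TangentAlgebra₁ K t s)
    (hκ : ∀ u, κ u = algebraMap K (TangentAlgebra₁ K t s) (α u + β u) - u) :
    (∀ u w, α u = β w → α (star u w) = α w ∧ β (star u w) = β u) ∧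
    (∀ u w z, α u = β w → α w = β z → star (star u w) z = star u (star w z)) ∧
    (∀ u, star u (algebraMap K (TangentAlgebra₁ K t s) (α u)) = u ∧
          star (algebraMap K (TangentAlgebra₁ K t s) (β u)) u = u) ∧
    (∀ u, star u (κ u) = algebraMap K (TangentAlgebra₁ K t s) (β u) ∧
          star (κ u) u = algebraMap K (TangentAlgebra₁ K t s) (α u)) :=
  tangentAlgebra_groupoid_general K t s α β star hstar κ hκ
end

section
/- In the first-order tangent algebra A = K[X]⧸((X - C s)(X - C t)), the groupoid law u ⋆ w := u - algebraMap K A (α(u)) + w (defined when α(u) = β(w)) is multiplicative with respect to the ring product: for all u, w, u', w' ∈ A with α(u) = β(w) and α(u') = β(w'), one has (u ⋆ w) * (u' ⋆ w') = (u * u') ⋆ (w * w') (note α(u * u') = β(w * w'), so the right-hand side is defined). -/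
open Polynomial

/-!
Write `u ⋆ w = a + ε + δ` with `a = α u = β w`, `ε = u - a ∈ ker α` and `δ = w - a ∈ ker β`.
Expanding `(u ⋆ w) * (u' ⋆ w')` and `(u * u') ⋆ (w * w')` in these coordinates, they differ by the
cross terms `ε δ' + ε' δ`, which vanish because `ker α · ker β = 0` in `K[X] ⧸ ((X - s)(X - t))`:
representatives of elements of `ker α` are divisible by `X - s`, those of `ker β` by `X - t`.
-/

theorem TangentAlgebra₁.mul_eq_zero_of_apply_eq_zero {K : Type*} [CommRing K] {t s : K}
    {α β : TangentAlgebra₁ K t s →ₐ[K] K}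
    (hα : ∀ P : K[X], α (Ideal.Quotient.mk (tIdeal K t s) P) = P.eval s)
    (hβ : ∀ P : K[X], β (Ideal.Quotient.mk (tIdeal K t s) P) = P.eval t)
    {x y : TangentAlgebra₁ K t s} (hx : α x = 0) (hy : β y = 0) : x * y = 0 := by
  obtain ⟨P, rfl⟩ := Ideal.Quotient.mk_surjective x
  obtain ⟨Q, rfl⟩ := Ideal.Quotient.mk_surjective y
  rw [hα] at hx
  rw [hβ] at hy
  rw [← map_mul, Ideal.Quotient.eq_zero_iff_mem, Ideal.mem_span_singleton]
  exact mul_dvd_mul (dvd_iff_isRoot.2 hx) (dvd_iff_isRoot.2 hy)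

theorem AlgHom.groupoid_law_mul {K A : Type*} [CommRing K] [CommRing A] [Algebra K A]
    {α β : A →ₐ[K] K} (hαβ : ∀ x y : A, α x = 0 → β y = 0 → x * y = 0)
    {u w u' w' : A} (h : α u = β w) (h' : α u' = β w') :
    (u - algebraMap K A (α u) + w) * (u' - algebraMap K A (α u') + w') =
      u * u' - algebraMap K A (α (u * u')) + w * w' := by
  set c := algebraMap K A
  have hε : ∀ v, α (v - c (α v)) = 0 := fun v => by simp [c]
  have hδ : ∀ v a, β v = a → β (v - c a) = 0 := fun v a hv => by simp [c, hv]
  have cross₁ := hαβ _ _ (hε u) (hδ w' _ h'.symm)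
  have cross₂ := hαβ _ _ (hε u') (hδ w _ h.symm)
  rw [map_mul, map_mul]
  linear_combination cross₁ + cross₂

/-- The groupoid law `u ⋆ w = u - algebraMap K A (α u) + w` on the first-order tangent
algebra is multiplicative with respect to the ring product:
`(u ⋆ w) * (u' ⋆ w') = (u * u') ⋆ (w * w')` whenever `α u = β w` and `α u' = β w'`. -/
theorem groupoid_law_multiplicative (K : Type*) [CommRing K] (t s : K)
    (α β : TangentAlgebra₁ K t s →ₐ[K] K)
    (hα : ∀ P : Polynomial K, α (Ideal.Quotient.mk (tIdeal K t s) P) = P.eval s)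
    (hβ : ∀ P : Polynomial K, β (Ideal.Quotient.mk (tIdeal K t s) P) = P.eval t)
    (star : TangentAlgebra₁ K t s → TangentAlgebra₁ K t s → TangentAlgebra₁ K t s)
    (hstar : ∀ u w, star u w = u - algebraMap K (TangentAlgebra₁ K t s) (α u) + w) :
    ∀ u w u' w' : TangentAlgebra₁ K t s, α u = β w → α u' = β w' →
      star u w * star u' w' = star (u * u') (w * w') := by
  intro u w u' w' h h'
  simp only [hstar]
  exact AlgHom.groupoid_law_mul
    (fun _ _ => TangentAlgebra₁.mul_eq_zero_of_apply_eq_zero hα hβ) h h'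
end

section
/- Let V, W be K-modules, t s : Fin n → K with each t i - s i a unit of K, and let d⁻¹ ∈ K be the inverse of the unit ∏_{i} (t i - s i). For a K-module P and p : Finset (Fin n) → P define the anchor Υ_P p : Finset (Fin n) → P by (Υ_P p) A = ∑_{C : Finset (Fin n)} ((∏_{i ∈ C ∩ A} t i) * (∏_{i ∈ C \ A} s i)) • p C. For an arbitrary function f : V → W and v : Finset (Fin n) → V, define the n-th order slope F v : Finset (Fin n) → W by (F v) B = d⁻¹ • ∑_{A : Finset (Fin n)} ((-1)^{|A Δ B|} * (∏_{i ∈ Bᶜ ∩ A} s i) * (∏_{i ∈ Bᶜ ∩ Aᶜ} t i)) • f ((Υ_V v) A). Then Υ_W ∘ F = (fun v A => f ((Υ_V v) A)); i.e. (Υ_W (F v)) A = f ((Υ_V v) A) for all v and all A, so F = Υ_W⁻¹ ∘ f^{2^n} ∘ Υ_V. -/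
open Finset

lemma anchor_key {K : Type*} [CommRing K] {n : ℕ} (t s : Fin n → K)
    (A A' : Finset (Fin n)) :
    ∑ B : Finset (Fin n),
      ((∏ i ∈ B ∩ A, t i) * (∏ i ∈ B \ A, s i)) *
        ((-1 : K) ^ (symmDiff A' B).card * (∏ i ∈ Bᶜ ∩ A', s i) * (∏ i ∈ Bᶜ ∩ A'ᶜ, t i)) =
    if A' = A then ∏ i, (t i - s i) else 0 := by
  set F : Fin n → K := fun i => (if i ∈ A then t i else s i) * (if i ∈ A' then 1 else -1)
    with hFdef
  set G : Fin n → K := fun i => if i ∈ A' then -s i else t i with hGdef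
  have hneg : ∀ C : Finset (Fin n), ∏ i ∈ C, (-s i) = (-1 : K) ^ C.card * ∏ i ∈ C, s i := by
    intro C
    rw [← Finset.prod_const, ← Finset.prod_mul_distrib]
    exact Finset.prod_congr rfl fun i _ => (neg_one_mul (s i)).symm
  have hsummand : ∀ B : Finset (Fin n),
      ((∏ i ∈ B ∩ A, t i) * (∏ i ∈ B \ A, s i)) *
        ((-1 : K) ^ (symmDiff A' B).card * (∏ i ∈ Bᶜ ∩ A', s i) * (∏ i ∈ Bᶜ ∩ A'ᶜ, t i)) =
      (∏ i ∈ B, F i) * ∏ i ∈ Finset.univ \ B, G i := by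
    intro B
    have h1 : (∏ i ∈ B, F i)
        = ((∏ i ∈ B ∩ A, t i) * (∏ i ∈ B \ A, s i)) * (-1 : K) ^ (B \ A').card := by
      have eA : B.filter (fun i => ¬ i ∈ A) = B \ A := by ext i; simp
      have eA' : B.filter (fun i => ¬ i ∈ A') = B \ A' := by ext i; simp
      rw [hFdef, Finset.prod_mul_distrib]
      congr 1
      · rw [Finset.prod_ite, Finset.filter_mem_eq_inter, eA]
      · rw [Finset.prod_ite, Finset.prod_const_one, one_mul, Finset.prod_const, eA']
    have h2 : (∏ i ∈ Finset.univ \ B, G i)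
        = (-1 : K) ^ (Bᶜ ∩ A').card * (∏ i ∈ Bᶜ ∩ A', s i) * ∏ i ∈ Bᶜ ∩ A'ᶜ, t i := by
      have hc : Finset.univ \ B = Bᶜ := (Finset.compl_eq_univ_sdiff B).symm
      have e1 : Bᶜ.filter (· ∈ A') = Bᶜ ∩ A' := Finset.filter_mem_eq_inter
      have e2 : Bᶜ.filter (fun i => ¬ i ∈ A') = Bᶜ ∩ A'ᶜ := by ext i; simp
      rw [hc, hGdef, Finset.prod_ite, e1, e2, hneg]
    have hcard : (symmDiff A' B).card = (Bᶜ ∩ A').card + (B \ A').card := by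
      rw [symmDiff_def, Finset.sup_eq_union, Finset.card_union_of_disjoint disjoint_sdiff_sdiff]
      congr 2
      ext i; simp [and_comm]
    rw [h1, h2, hcard, pow_add]
    ring
  rw [Finset.sum_congr rfl fun B _ => hsummand B]
  have hpow : (Finset.univ : Finset (Finset (Fin n))) = Finset.univ.powerset := by
    simp [Finset.powerset_univ]
  rw [hpow, ← Finset.prod_add]
  by_cases h : A' = A
  · subst h
    rw [if_pos rfl]
    apply Finset.prod_congr rfl
    intro i _
    by_cases hi : i ∈ A' <;> simp [F, G, hi] <;> ring
  · rw [if_neg h]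
    have : ∃ i, (i ∈ A' ∧ i ∉ A) ∨ (i ∈ A ∧ i ∉ A') := by
      by_contra hcon
      push_neg at hcon
      apply h
      ext i
      have := hcon i
      constructor <;> intro hi <;> by_contra hni <;> tauto
    obtain ⟨i0, hi0⟩ := this
    apply Finset.prod_eq_zero (Finset.mem_univ i0)
    rcases hi0 with ⟨h1, h2⟩ | ⟨h1, h2⟩ <;> simp [F, G, h1, h2]


/-- For regular `(t,s)` and an arbitrary map `f : V → W`, the `n`-th order slope
`F = Υ_W⁻¹ ∘ f^{2^n} ∘ Υ_V` satisfies `Υ_W (F v) A = f ((Υ_V v) A)` for all `v` and `A`,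
where `Υ_P p A = ∑_C ((∏_{i ∈ C ∩ A} t i)(∏_{i ∈ C \ A} s i)) • p C` is the anchor. -/
theorem slope_anchor_conjugation (K : Type*) [CommRing K] (n : ℕ)
    (V : Type*) [AddCommGroup V] [Module K V]
    (W : Type*) [AddCommGroup W] [Module K W]
    (t s : Fin n → K)
    (hreg : ∀ i : Fin n, IsUnit (t i - s i))
    (dinv : K) (hd : (∏ i : Fin n, (t i - s i)) * dinv = 1)
    (ΥV : (Finset (Fin n) → V) → (Finset (Fin n) → V))
    (hΥV : ∀ (p : Finset (Fin n) → V) (A : Finset (Fin n)),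
      ΥV p A = ∑ C : Finset (Fin n), ((∏ i ∈ C ∩ A, t i) * (∏ i ∈ C \ A, s i)) • p C)
    (ΥW : (Finset (Fin n) → W) → (Finset (Fin n) → W))
    (hΥW : ∀ (p : Finset (Fin n) → W) (A : Finset (Fin n)),
      ΥW p A = ∑ C : Finset (Fin n), ((∏ i ∈ C ∩ A, t i) * (∏ i ∈ C \ A, s i)) • p C)
    (f : V → W)
    (F : (Finset (Fin n) → V) → (Finset (Fin n) → W))
    (hF : ∀ (v : Finset (Fin n) → V) (B : Finset (Fin n)),
      F v B = dinv • ∑ A : Finset (Fin n),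
        ((-1 : K) ^ (symmDiff A B).card * (∏ i ∈ Bᶜ ∩ A, s i) * (∏ i ∈ Bᶜ ∩ Aᶜ, t i)) •
          f (ΥV v A)) :
    ∀ (v : Finset (Fin n) → V) (A : Finset (Fin n)), ΥW (F v) A = f (ΥV v A) := by
  intro v A
  rw [hΥW]
  have step1 : ∀ B : Finset (Fin n),
      ((∏ i ∈ B ∩ A, t i) * (∏ i ∈ B \ A, s i)) • F v B
      = ∑ A' : Finset (Fin n),
          (dinv * (((∏ i ∈ B ∩ A, t i) * (∏ i ∈ B \ A, s i)) *
            ((-1 : K) ^ (symmDiff A' B).card * (∏ i ∈ Bᶜ ∩ A', s i) *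
              (∏ i ∈ Bᶜ ∩ A'ᶜ, t i)))) • f (ΥV v A') := by
    intro B
    rw [hF, Finset.smul_sum, Finset.smul_sum]
    apply Finset.sum_congr rfl
    intro A' _
    rw [smul_smul, smul_smul]
    ring_nf
  rw [Finset.sum_congr rfl fun B _ => step1 B, Finset.sum_comm]
  have step2 : ∀ A' : Finset (Fin n),
      (∑ B : Finset (Fin n),
        (dinv * (((∏ i ∈ B ∩ A, t i) * (∏ i ∈ B \ A, s i)) *
          ((-1 : K) ^ (symmDiff A' B).card * (∏ i ∈ Bᶜ ∩ A', s i) *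
            (∏ i ∈ Bᶜ ∩ A'ᶜ, t i)))) • f (ΥV v A'))
      = (if A' = A then (1 : K) else 0) • f (ΥV v A') := by
    intro A'
    rw [← Finset.sum_smul, ← Finset.mul_sum, anchor_key t s A A']
    congr 1
    by_cases h : A' = A
    · simp [h, mul_comm dinv _, hd]
    · simp [h]
  rw [Finset.sum_congr rfl fun A' _ => step2 A']
  simp
end
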